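/- arXiv:1411.4412 — 4 statements merged into one kernel-verified Lean document; each statement's English description precedes it below -/
import Mathlib

section
/- Let Ã > 0, let (φ̄, θ̄) ∈ ℝ², set B₀ := φ̄² + (√2+1)² θ̄² + 1/(4Ã²) and (x, y, z) := (1/(2ÃB₀), (√2+1)θ̄/B₀, φ̄/B₀) (the image of (−1/(2Ã), (√2+1)θ̄, φ̄) under the unit-sphere inversion followed by reflection of the first coordinate). Then (x − Ã)² + y² + z² = Ã², and ψ₀(φ̄, θ̄) := −(φ̄² + (√2+1)θ̄² − √2/(8Ã²))/B₀ satisfies ψ₀ = −(1/(2Ãx))(z² + y² − (2−√2)y²) + (√2/(4Ã))x. Moreover, writing x = Ã(1 + cos θ), y = Ã sin θ cos φ, z = Ã sin θ sin φ with (θ, φ) ∈ (0, π) × [0, 2π], one has ψ₀ = (√2/2) cos θ + ((2−√2)/4)(1 − cos θ) cos 2φ. -/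
/-!
Inversion in the unit sphere maps the plane `{x = -1/(2Ã)}` onto the sphere of radius `Ã`
through the origin, reflected so that it is centred at `Ã e_x`; on that sphere `x² + y² + z² = 2Ãx`.
Since `1/(2Ãx) = B₀`, the second identity reduces to `(√2 - 1)(√2 + 1) = 1`. In spherical
coordinates `(y² + z²)/(2Ãx) = (1 - cos θ)/2` and `y²/(2Ãx) = (1 - cos θ) cos² φ / 2`, and the
last identity follows from `2 cos² φ = 1 + cos 2φ`.
-/

open Real

lemma inversion_mem_sphere {a p q B : ℝ} (ha : a ≠ 0)
    (hB : B = p ^ 2 + q ^ 2 + 1 / (4 * a ^ 2)) :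
    (1 / (2 * a * B) - a) ^ 2 + (q / B) ^ 2 + (p / B) ^ 2 = a ^ 2 := by
  have hB_pos : 0 < B := by rw [hB]; positivity
  rw [hB] at hB_pos ⊢
  field_simp
  ring

lemma sqrt_two_sub_one_mul_sqrt_two_add_one : (√2 - 1) * (√2 + 1) = 1 := by
  nlinarith [sq_sqrt (zero_le_two : (0 : ℝ) ≤ 2)]

lemma psi0_eq_inversion_form {a p t B : ℝ} (ha : a ≠ 0) (hB : B ≠ 0) :
    -((p ^ 2 + (√2 + 1) * t ^ 2 - √2 / (8 * a ^ 2)) / B) =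
      -(1 / (2 * a * (1 / (2 * a * B)))) *
          ((p / B) ^ 2 + ((√2 + 1) * t / B) ^ 2 - (2 - √2) * ((√2 + 1) * t / B) ^ 2) +
        √2 / (4 * a) * (1 / (2 * a * B)) := by
  field_simp
  linear_combination (64 * a ^ 2 * t ^ 2 * (√2 + 1)) * sqrt_two_sub_one_mul_sqrt_two_add_one

lemma inversion_form_eq_spherical (a k θ φ : ℝ) (ha : a ≠ 0) (hθ : 1 + cos θ ≠ 0) :
    -(1 / (2 * a * (a * (1 + cos θ)))) *
          ((a * sin θ * sin φ) ^ 2 + (a * sin θ * cos φ) ^ 2 -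
            (2 - k) * (a * sin θ * cos φ) ^ 2) +
        k / (4 * a) * (a * (1 + cos θ)) =
      k / 2 * cos θ + (2 - k) / 4 * (1 - cos θ) * cos (2 * φ) := by
  rw [cos_two_mul]
  field_simp
  linear_combination (4 * (1 - k) * cos φ ^ 2 - 4 * sin φ ^ 2) * sin_sq θ -
    4 * (1 - cos θ ^ 2) * sin_sq φ

theorem statement10 (Atil φb θb B0 x y z ψ0 : ℝ) (hA : 0 < Atil)
    (hB0 : B0 = φb ^ 2 + (Real.sqrt 2 + 1) ^ 2 * θb ^ 2 + 1 / (4 * Atil ^ 2))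
    (hx : x = 1 / (2 * Atil * B0))
    (hy : y = (Real.sqrt 2 + 1) * θb / B0)
    (hz : z = φb / B0)
    (hψ : ψ0 = -((φb ^ 2 + (Real.sqrt 2 + 1) * θb ^ 2 -
        Real.sqrt 2 / (8 * Atil ^ 2)) / B0)) :
    ((x - Atil) ^ 2 + y ^ 2 + z ^ 2 = Atil ^ 2) ∧
      (ψ0 = -(1 / (2 * Atil * x)) * (z ^ 2 + y ^ 2 - (2 - Real.sqrt 2) * y ^ 2) +
        Real.sqrt 2 / (4 * Atil) * x) ∧
      (∀ θ φ : ℝ, θ ∈ Set.Ioo 0 Real.pi → φ ∈ Set.Icc 0 (2 * Real.pi) →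
        x = Atil * (1 + Real.cos θ) →
        y = Atil * Real.sin θ * Real.cos φ →
        z = Atil * Real.sin θ * Real.sin φ →
        ψ0 = Real.sqrt 2 / 2 * Real.cos θ +
          (2 - Real.sqrt 2) / 4 * (1 - Real.cos θ) * Real.cos (2 * φ)) := by
  have hB0_pos : 0 < B0 := by rw [hB0]; positivity
  have hψ_form : ψ0 = -(1 / (2 * Atil * x)) * (z ^ 2 + y ^ 2 - (2 - √2) * y ^ 2) +
      √2 / (4 * Atil) * x := by
    rw [hψ, hx, hy, hz]
    exact psi0_eq_inversion_form hA.ne' hB0_pos.ne'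
  refine ⟨?_, hψ_form, ?_⟩
  · rw [hx, hy, hz]
    exact inversion_mem_sphere hA.ne' (by rw [hB0, mul_pow])
  · rintro θ φ hθ - rfl rfl rfl
    have hcos : -1 < cos θ := by
      simpa using cos_lt_cos_of_nonneg_of_le_pi hθ.1.le le_rfl hθ.2
    rw [hψ_form]
    exact inversion_form_eq_spherical Atil √2 θ φ hA.ne' (by linarith)
end

section
/- Let α₁, α₂, α₃ be pairwise distinct real numbers. Then (x₁, …, x₆, λ, μ, ν) ∈ ℝ⁹ satisfies the system { 2(α_i − λ)x_i − ν x_{i+3} = 0 for i = 1,2,3; ν x_i + 2(μ + α_i)x_{i+3} = 0 for i = 1,2,3; x₁² + x₂² + x₃² = 1; x₄² + x₅² + x₆² = 1; x₁x₄ + x₂x₅ + x₃x₆ = 0 } if and only if there exist indices i, j ∈ {1,2,3} with i ≠ j and signs s, t ∈ {1, −1} such that x_i = s, x_{j+3} = t, all other coordinates x_k (k ∈ {1,…,6} ∖ {i, j+3}) vanish, λ = α_i, μ = −α_j, and ν = 0. In particular the system has exactly 24 solutions in (x₁, …, x₆). -/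
/-!
Pairing the second equations with `x`, the first with `y`, and subtracting gives
`ν (|x|² + |y|²) + 2 (λ + μ) ⟨x, y⟩ = 0`, so the constraints force `ν = 0`. The remaining equations
say that `x` and `y` are eigenvectors of the diagonal form `diag α` with eigenvalues `λ` and `-μ`;
as the `αᵢ` are distinct, each is a signed basis vector, and orthogonality separates the two indices.
-/

open Function

lemma eq_and_eq_zero_of_sub_mul_eq_zero {ι : Type*} {α x : ι → ℝ} (hα : Injective α) {c : ℝ}
    (h : ∀ k, (α k - c) * x k = 0) {i : ι} (hi : x i ≠ 0) : c = α i ∧ ∀ k ≠ i, x k = 0 := by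
  have hc : α i = c := sub_eq_zero.1 ((mul_eq_zero.1 (h i)).resolve_right hi)
  refine ⟨hc.symm, fun k hk => (mul_eq_zero.1 (h k)).resolve_left ?_⟩
  rw [sub_eq_zero, ← hc]
  exact hα.ne hk

section

variable {ι : Type*} [Fintype ι]

lemma multiplier_eq_zero_of_stationary {α x y : ι → ℝ} {l m v : ℝ}
    (h₁ : ∀ i, 2 * (α i - l) * x i - v * y i = 0) (h₂ : ∀ i, v * x i + 2 * (m + α i) * y i = 0)
    (hx : ∑ i, x i ^ 2 = 1) (hy : ∑ i, y i ^ 2 = 1) (hxy : ∑ i, x i * y i = 0) : v = 0 := by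
  have key : ∑ i, (x i * (v * x i + 2 * (m + α i) * y i) - y i * (2 * (α i - l) * x i - v * y i))
      = v * ∑ i, x i ^ 2 + v * ∑ i, y i ^ 2 + 2 * (m + l) * ∑ i, x i * y i := by
    simp only [Finset.mul_sum, ← Finset.sum_add_distrib]
    exact Finset.sum_congr rfl fun i _ => by ring
  simp only [h₁, h₂, hx, hy, hxy, mul_zero, sub_zero, Finset.sum_const_zero] at key
  linarith

lemma exists_ne_zero_of_sum_sq_eq_one {x : ι → ℝ} (hx : ∑ i, x i ^ 2 = 1) : ∃ i, x i ≠ 0 := by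
  by_contra! h
  simp [h] at hx

lemma sum_sq_eq_one_iff_of_eq_zero {x : ι → ℝ} {i : ι} (hx : ∀ k ≠ i, x k = 0) :
    ∑ k, x k ^ 2 = 1 ↔ x i = 1 ∨ x i = -1 := by
  rw [Fintype.sum_eq_single i fun k hk => by simp [hx k hk], sq_eq_one_iff]

lemma sum_mul_eq_of_eq_zero {x y : ι → ℝ} {i : ι} (hx : ∀ k ≠ i, x k = 0) :
    ∑ k, x k * y k = x i * y i :=
  Fintype.sum_eq_single i fun k hk => by simp [hx k hk]

end

theorem statement12 (α : Fin 3 → ℝ) (hdist : ∀ i j : Fin 3, i ≠ j → α i ≠ α j)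
    (x y : Fin 3 → ℝ) (l m v : ℝ) :
    ((∀ i : Fin 3, 2 * (α i - l) * x i - v * y i = 0) ∧
      (∀ i : Fin 3, v * x i + 2 * (m + α i) * y i = 0) ∧
      (∑ i, x i ^ 2 = 1) ∧ (∑ i, y i ^ 2 = 1) ∧ (∑ i, x i * y i = 0)) ↔
    (∃ i j : Fin 3, i ≠ j ∧ ∃ s t : ℝ, (s = 1 ∨ s = -1) ∧ (t = 1 ∨ t = -1) ∧
      x i = s ∧ y j = t ∧ (∀ k : Fin 3, k ≠ i → x k = 0) ∧
      (∀ k : Fin 3, k ≠ j → y k = 0) ∧ l = α i ∧ m = -α j ∧ v = 0) := by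
  have hα : Injective α := fun i j h => by_contra fun hij => hdist i j hij h
  constructor
  · rintro ⟨h₁, h₂, hx, hy, hxy⟩
    obtain rfl := multiplier_eq_zero_of_stationary h₁ h₂ hx hy hxy
    obtain ⟨i, hxi⟩ := exists_ne_zero_of_sum_sq_eq_one hx
    obtain ⟨j, hyj⟩ := exists_ne_zero_of_sum_sq_eq_one hy
    obtain ⟨hl, hxk⟩ := eq_and_eq_zero_of_sub_mul_eq_zero hα
      (fun k => by linear_combination h₁ k / 2) hxi
    obtain ⟨hm, hyk⟩ := eq_and_eq_zero_of_sub_mul_eq_zero hα (c := -m)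
      (fun k => by linear_combination h₂ k / 2) hyj
    have hij : i ≠ j := by
      rintro rfl
      exact mul_ne_zero hxi hyj (sum_mul_eq_of_eq_zero hxk ▸ hxy)
    exact ⟨i, j, hij, x i, y j, (sum_sq_eq_one_iff_of_eq_zero hxk).1 hx,
      (sum_sq_eq_one_iff_of_eq_zero hyk).1 hy, rfl, rfl, hxk, hyk, hl, by linarith, rfl⟩
  · rintro ⟨i, j, hij, s, t, hs, ht, rfl, rfl, hxk, hyk, rfl, rfl, rfl⟩
    refine ⟨fun k => ?_, fun k => ?_, (sum_sq_eq_one_iff_of_eq_zero hxk).2 hs,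
      (sum_sq_eq_one_iff_of_eq_zero hyk).2 ht, by simp [sum_mul_eq_of_eq_zero hxk, hyk i hij]⟩
    · obtain rfl | hk := eq_or_ne k i
      · ring
      · simp [hxk k hk]
    · obtain rfl | hk := eq_or_ne k j
      · ring
      · simp [hyk k hk]
end

section
/- Let à := (2π²)^{1/4}, let S = (R_{ij}) be a symmetric real 3×3 matrix, and set ψ₀(θ, φ) := (√2/2) cos θ + ((2−√2)/4)(1 − cos θ) cos 2φ and n₀(θ, φ) := (cos θ, sin θ cos φ, sin θ sin φ). Then ∫₀^π ∫₀^{2π} (2/Ã) ⟨S n₀(θ,φ), n₀(θ,φ)⟩ ψ₀(θ, φ) Ã² sin θ dφ dθ = (4/3) π à ((2−√2)/4) (R₂₂ − R₃₃). -/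
noncomputable section

open Matrix

/-- `Ã = (2π²)^{1/4}`. -/
def Atil : ℝ := (2 * Real.pi ^ 2) ^ ((1 : ℝ) / 4)

/-- The outward unit normal of the sphere `S²_Ã` in spherical coordinates. -/
def n0v (θ φ : ℝ) : Fin 3 → ℝ :=
  ![Real.cos θ, Real.sin θ * Real.cos φ, Real.sin θ * Real.sin φ]

/-- The limit normal variation field `ψ₀`. -/
def psi0s (θ φ : ℝ) : ℝ :=
  Real.sqrt 2 / 2 * Real.cos θ +
    (2 - Real.sqrt 2) / 4 * (1 - Real.cos θ) * Real.cos (2 * φ)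

/-! Integrate first in `φ`. As a function of `φ`, the quadratic form `⟨S n₀, n₀⟩` is a
trigonometric polynomial of degree two, and `ψ₀ = a(θ) + b(θ) cos 2φ`; by orthogonality on
`[0, 2π]` only the mean of the form and its `cos 2φ`-coefficient `(R₂₂ - R₃₃) sin² θ / 2` survive.
The substitution `u = cos θ` turns the remaining `θ`-integral into the integral of a cubic over
`[-1, 1]`, where the odd powers drop out. -/

open Real intervalIntegral

theorem integral_cos_int_mul_zero_two_pi {k : ℤ} (hk : k ≠ 0) :
    ∫ x in (0 : ℝ)..2 * π, cos (k * x) = 0 := by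
  have hk' : (k : ℝ) ≠ 0 := by exact_mod_cast hk
  rw [integral_comp_mul_left _ hk', integral_cos, mul_zero, sin_zero, sub_zero,
    show (k : ℝ) * (2 * π) = (2 * k : ℤ) * π by push_cast; ring, sin_int_mul_pi, smul_zero]

theorem integral_sin_int_mul_zero_two_pi (k : ℤ) :
    ∫ x in (0 : ℝ)..2 * π, sin (k * x) = 0 := by
  rcases eq_or_ne k 0 with rfl | hk
  · simp
  have hk' : (k : ℝ) ≠ 0 := by exact_mod_cast hk
  rw [integral_comp_mul_left _ hk', integral_sin, mul_zero, cos_zero, cos_int_mul_two_pi,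
    sub_self, smul_zero]

theorem integral_cos_mul_cos_zero_two_pi {m n : ℕ} (h : m ≠ n) :
    ∫ x in (0 : ℝ)..2 * π, cos (m * x) * cos (n * x) = 0 := by
  have hsub : ((m : ℤ) - n : ℤ) ≠ 0 := sub_ne_zero.mpr (by exact_mod_cast h)
  have hadd : ((m : ℤ) + n : ℤ) ≠ 0 := by omega
  have hpt : ∀ x : ℝ, cos (m * x) * cos (n * x)
      = cos (((m - n : ℤ) : ℝ) * x) / 2 + cos (((m + n : ℤ) : ℝ) * x) / 2 := by
    intro x
    have := two_mul_cos_mul_cos (m * x) (n * x)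
    push_cast
    rw [sub_mul, add_mul]
    linarith
  simp_rw [hpt]
  rw [integral_add, integral_div, integral_div, integral_cos_int_mul_zero_two_pi hsub,
    integral_cos_int_mul_zero_two_pi hadd]
  · simp
  all_goals exact (by fun_prop : Continuous _).intervalIntegrable _ _

theorem integral_sin_mul_cos_zero_two_pi (m n : ℕ) :
    ∫ x in (0 : ℝ)..2 * π, sin (m * x) * cos (n * x) = 0 := by
  have hpt : ∀ x : ℝ, sin (m * x) * cos (n * x)
      = sin (((m - n : ℤ) : ℝ) * x) / 2 + sin (((m + n : ℤ) : ℝ) * x) / 2 := by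
    intro x
    have := two_mul_sin_mul_cos (m * x) (n * x)
    push_cast
    rw [sub_mul, add_mul]
    linarith
  simp_rw [hpt]
  rw [integral_add, integral_div, integral_div, integral_sin_int_mul_zero_two_pi,
    integral_sin_int_mul_zero_two_pi]
  · simp
  all_goals exact (by fun_prop : Continuous _).intervalIntegrable _ _

theorem integral_cos_int_mul_sq_zero_two_pi {k : ℤ} (hk : k ≠ 0) :
    ∫ x in (0 : ℝ)..2 * π, cos (k * x) ^ 2 = π := by
  have h2k : (2 * k : ℤ) ≠ 0 := mul_ne_zero two_ne_zero hk
  simp_rw [cos_sq, ← mul_assoc]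
  rw [integral_add, integral_div]
  · have h := integral_cos_int_mul_zero_two_pi h2k
    push_cast at h
    simp [h]
  all_goals exact (by fun_prop : Continuous _).intervalIntegrable _ _

theorem integral_trigPoly_mul_zero_two_pi (α β γ δ ε a b : ℝ) :
    ∫ φ in (0 : ℝ)..2 * π,
        (α + β * cos (2 * φ) + γ * sin (2 * φ) + δ * cos φ + ε * sin φ) * (a + b * cos (2 * φ))
      = π * (2 * a * α + b * β) := by
  have hcos2 : ∫ φ in (0 : ℝ)..2 * π, cos (2 * φ) = 0 := by
    simpa using integral_cos_int_mul_zero_two_pi (k := 2) two_ne_zero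
  have hsin2 : ∫ φ in (0 : ℝ)..2 * π, sin (2 * φ) = 0 := by
    simpa using integral_sin_int_mul_zero_two_pi 2
  have hcos : ∫ φ in (0 : ℝ)..2 * π, cos φ = 0 := by simp
  have hsin : ∫ φ in (0 : ℝ)..2 * π, sin φ = 0 := by simp
  have hcos1cos2 : ∫ φ in (0 : ℝ)..2 * π, cos φ * cos (2 * φ) = 0 := by
    simpa using integral_cos_mul_cos_zero_two_pi (m := 1) (n := 2) (by norm_num)
  have hsin1cos2 : ∫ φ in (0 : ℝ)..2 * π, sin φ * cos (2 * φ) = 0 := by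
    simpa using integral_sin_mul_cos_zero_two_pi 1 2
  have hsin2cos2 : ∫ φ in (0 : ℝ)..2 * π, sin (2 * φ) * cos (2 * φ) = 0 := by
    simpa using integral_sin_mul_cos_zero_two_pi 2 2
  have hcos2sq : ∫ φ in (0 : ℝ)..2 * π, cos (2 * φ) * cos (2 * φ) = π := by
    simpa [sq] using integral_cos_int_mul_sq_zero_two_pi (k := 2) two_ne_zero
  have hexpand : ∀ φ, (α + β * cos (2 * φ) + γ * sin (2 * φ) + δ * cos φ + ε * sin φ)
      * (a + b * cos (2 * φ))
    = a * α + (a * β + b * α) * cos (2 * φ) + a * γ * sin (2 * φ) + a * δ * cos φ + a * ε * sin φ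
      + b * β * (cos (2 * φ) * cos (2 * φ)) + b * γ * (sin (2 * φ) * cos (2 * φ))
      + b * δ * (cos φ * cos (2 * φ)) + b * ε * (sin φ * cos (2 * φ)) := fun φ => by ring
  simp_rw [hexpand]
  repeat rw [integral_add ((by fun_prop : Continuous _).intervalIntegrable _ _)
    ((by fun_prop : Continuous _).intervalIntegrable _ _)]
  simp only [integral_const_mul, integral_const, smul_eq_mul, hcos2, hsin2, hcos, hsin, hcos1cos2,
    hsin1cos2, hsin2cos2, hcos2sq]
  ring

theorem integral_comp_cos_mul_sin_zero_pi {g : ℝ → ℝ} (hg : Continuous g) :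
    ∫ θ in (0 : ℝ)..π, g (cos θ) * sin θ = ∫ u in (-1 : ℝ)..1, g u := by
  have hsub := integral_comp_mul_deriv (a := 0) (b := π) (f' := fun θ => -sin θ)
    (fun θ _ => hasDerivAt_cos θ) (by fun_prop) hg
  simp only [Function.comp_def, mul_neg, integral_neg, cos_zero, cos_pi] at hsub
  rw [← neg_neg (∫ θ in (0 : ℝ)..π, g (cos θ) * sin θ), hsub, integral_symm, neg_neg]

theorem integral_cubic_cos_mul_sin_zero_pi (c₀ c₁ c₂ c₃ : ℝ) :
    ∫ θ in (0 : ℝ)..π, (c₀ + c₁ * cos θ + c₂ * cos θ ^ 2 + c₃ * cos θ ^ 3) * sin θ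
      = 2 * c₀ + 2 / 3 * c₂ := by
  rw [integral_comp_cos_mul_sin_zero_pi (g := fun u => c₀ + c₁ * u + c₂ * u ^ 2 + c₃ * u ^ 3)
    (by fun_prop), integral_add, integral_add, integral_add, integral_const_mul c₁ fun u => u]
  · simp only [integral_const_mul, integral_pow, integral_id, integral_const, smul_eq_mul]
    norm_num
    ring
  all_goals exact (by fun_prop : Continuous _).intervalIntegrable _ _

theorem quadForm_n0v (S : Matrix (Fin 3) (Fin 3) ℝ) (θ φ : ℝ) :
    S *ᵥ n0v θ φ ⬝ᵥ n0v θ φ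
      = (S 0 0 * cos θ ^ 2 + (S 1 1 + S 2 2) / 2 * sin θ ^ 2)
        + (S 1 1 - S 2 2) / 2 * sin θ ^ 2 * cos (2 * φ)
        + (S 1 2 + S 2 1) / 2 * sin θ ^ 2 * sin (2 * φ)
        + (S 0 1 + S 1 0) * cos θ * sin θ * cos φ
        + (S 0 2 + S 2 0) * cos θ * sin θ * sin φ := by
  simp only [n0v, mulVec, dotProduct, Fin.sum_univ_three, cons_val_zero, cons_val_one,
    cons_val_two, head_cons, tail_cons]
  rw [cos_two_mul, sin_two_mul]
  linear_combination S 2 2 * sin θ ^ 2 * sin_sq_add_cos_sq φ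

theorem integral_quadForm_n0v_mul_psi0s (S : Matrix (Fin 3) (Fin 3) ℝ) (θ : ℝ) :
    ∫ φ in (0 : ℝ)..2 * π, (S *ᵥ n0v θ φ ⬝ᵥ n0v θ φ) * psi0s θ φ
      = π * (√2 * cos θ * (S 0 0 * cos θ ^ 2 + (S 1 1 + S 2 2) / 2 * sin θ ^ 2)
        + (2 - √2) / 8 * (1 - cos θ) * (S 1 1 - S 2 2) * sin θ ^ 2) := by
  simp_rw [quadForm_n0v, psi0s]
  rw [integral_trigPoly_mul_zero_two_pi]
  ring

theorem integral_sphere_quadForm_n0v_mul_psi0s (S : Matrix (Fin 3) (Fin 3) ℝ) :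
    ∫ θ in (0 : ℝ)..π, ∫ φ in (0 : ℝ)..2 * π,
        (S *ᵥ n0v θ φ ⬝ᵥ n0v θ φ) * psi0s θ φ * sin θ
      = π * (2 - √2) / 6 * (S 1 1 - S 2 2) := by
  set κ := (2 - √2) / 8 * (S 1 1 - S 2 2)
  set τ := √2 / 2 * (S 1 1 + S 2 2)
  have hcubic : ∀ θ, (∫ φ in (0 : ℝ)..2 * π, (S *ᵥ n0v θ φ ⬝ᵥ n0v θ φ) * psi0s θ φ * sin θ)
      = π * ((κ + (τ - κ) * cos θ + (-κ) * cos θ ^ 2 + (√2 * S 0 0 - τ + κ) * cos θ ^ 3)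
        * sin θ) := by
    intro θ
    rw [integral_mul_const, integral_quadForm_n0v_mul_psi0s, sin_sq]
    ring
  simp_rw [hcubic]
  rw [integral_const_mul, integral_cubic_cos_mul_sin_zero_pi]
  ring

theorem statement15_general (S : Matrix (Fin 3) (Fin 3) ℝ) :
    (∫ θ in (0 : ℝ)..Real.pi, ∫ φ in (0 : ℝ)..(2 * Real.pi),
        (2 / Atil) * (S.mulVec (n0v θ φ) ⬝ᵥ n0v θ φ) * psi0s θ φ *
          (Atil ^ 2 * Real.sin θ)) =
      4 / 3 * Real.pi * Atil * ((2 - Real.sqrt 2) / 4) * (S 1 1 - S 2 2) := by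
  have hA : Atil ≠ 0 := (Real.rpow_pos_of_pos (by positivity) _).ne'
  have hdensity : ∀ θ φ, (2 / Atil) * (S *ᵥ n0v θ φ ⬝ᵥ n0v θ φ) * psi0s θ φ * (Atil ^ 2 * sin θ)
      = 2 * Atil * ((S *ᵥ n0v θ φ ⬝ᵥ n0v θ φ) * psi0s θ φ * sin θ) := by
    intro θ φ
    field_simp
  simp_rw [hdensity, integral_const_mul, integral_sphere_quadForm_n0v_mul_psi0s]
  ring

theorem statement15 (S : Matrix (Fin 3) (Fin 3) ℝ) (hS : S.IsSymm) :
    (∫ θ in (0 : ℝ)..Real.pi, ∫ φ in (0 : ℝ)..(2 * Real.pi),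
        (2 / Atil) * (S.mulVec (n0v θ φ) ⬝ᵥ n0v θ φ) * psi0s θ φ *
          (Atil ^ 2 * Real.sin θ)) =
      4 / 3 * Real.pi * Atil * ((2 - Real.sqrt 2) / 4) * (S 1 1 - S 2 2) :=
  statement15_general S
end
end

section
/- Let S = (R_{ij}) be a symmetric real 3×3 matrix with Sc := tr S, and define h : ℝ³ → (symmetric 3×3 matrices) by h_{αβ}(x) := (Sc/6)(|x|² δ_{αβ} − x_α x_β) − (1/3) δ_{αβ} ⟨Sx, x⟩ − (1/3)|x|² R_{αβ} + (1/3)(x_α (Sx)_β + x_β (Sx)_α). Let à > 0, let n₀ be a unit vector in ℝ³, set x := Ã(n₀ + e_x) with e_x = (1,0,0), and let e₁, e₂ be unit vectors such that (e₁, e₂, n₀) is an orthonormal basis of ℝ³. Denote by ∂_{n₀}h(x) the matrix whose (α,β) entry is ⟨∇h_{αβ}(x), n₀⟩. Then ∂_{n₀}h(x)(e₁, e₁) + ∂_{n₀}h(x)(e₂, e₂) = −(2Ã/3) ⟨S(n₀ + e_x), n₀⟩. -/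
noncomputable section

open Matrix

/-- The first standard basis vector `eₓ`. -/
def exv : Fin 3 → ℝ := ![1, 0, 0]

/-- The second-order term of the metric in geodesic normal coordinates, expressed through
the Ricci tensor `S` and the scalar curvature `Sc = tr S`:
`h_{αβ}(x) = (Sc/6)(|x|²δ_{αβ} - x_α x_β) - (1/3)δ_{αβ}⟨Sx,x⟩ - (1/3)|x|² S_{αβ}
  + (1/3)(x_α (Sx)_β + x_β (Sx)_α)`. -/
def hEntry (S : Matrix (Fin 3) (Fin 3) ℝ) (x : Fin 3 → ℝ) (α β : Fin 3) : ℝ :=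
  Matrix.trace S / 6 *
      ((∑ i, x i ^ 2) * (if α = β then (1 : ℝ) else 0) - x α * x β) -
    (1 / 3) * (if α = β then (1 : ℝ) else 0) * (∑ i, (∑ j, S i j * x j) * x i) -
    (1 / 3) * (∑ i, x i ^ 2) * S α β +
    (1 / 3) * (x α * (∑ j, S β j * x j) + x β * (∑ j, S α j * x j))

/-- The entry `(∂_{n₀} h(x))_{αβ} = ⟨∇h_{αβ}(x), n₀⟩` of the normal derivative of `h`. -/
def dnhEntry (S : Matrix (Fin 3) (Fin 3) ℝ) (x n₀ : Fin 3 → ℝ) (α β : Fin 3) : ℝ :=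
  fderiv ℝ (fun y => hEntry S y α β) x n₀

/-! Each `h_{αβ}` is a quadratic form in `x`, so its derivative in the direction `n` is the
coefficient of `t` in `h_{αβ}(x + t n)`. Contracting with a unit vector `e ⊥ n` and summing over
the tangent frame, the identities `∑ₖ eₖ ⬝ M eₖ = tr M` for the orthonormal basis `(e₁, e₂, n)`,
applied to `M = S` and to `M = x (S n)ᵀ`, cancel everything except `-(2/3)⟨S x, n⟩`. -/

theorem fderiv_apply_eq_of_forall_add_smul {𝕜 E F : Type*} [NontriviallyNormedField 𝕜]
    [NormedAddCommGroup E] [NormedSpace 𝕜 E] [NormedAddCommGroup F] [NormedSpace 𝕜 F]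
    {f : E → F} {x v : E} {d c : F} (hf : DifferentiableAt 𝕜 f x)
    (hquad : ∀ t : 𝕜, f (x + t • v) = f x + t • d + t ^ 2 • c) :
    fderiv 𝕜 f x v = d := by
  have hline : HasDerivAt (fun t : 𝕜 => x + t • v) v 0 := by
    simpa using ((hasDerivAt_id (0 : 𝕜)).smul_const v).const_add x
  have hcomp : HasDerivAt (fun t : 𝕜 => f (x + t • v)) (fderiv 𝕜 f x v) 0 := by
    refine HasFDerivAt.comp_hasDerivAt_of_eq (0 : 𝕜) hf.hasFDerivAt hline ?_
    simp
  have hpoly : HasDerivAt (fun t : 𝕜 => f x + t • d + t ^ 2 • c) d 0 := by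
    simpa using (((hasDerivAt_id (0 : 𝕜)).smul_const d).const_add (f x)).fun_add
      ((hasDerivAt_pow 2 (0 : 𝕜)).smul_const c)
  exact hcomp.unique (by simpa only [hquad] using hpoly)

theorem Matrix.trace_eq_sum_dotProduct_mulVec {n R : Type*} [Fintype n] [DecidableEq n]
    [CommRing R] {Q : Matrix n n R} (hQ : Q * Qᵀ = 1) (M : Matrix n n R) :
    trace M = ∑ k, Q k ⬝ᵥ (M *ᵥ Q k) := by
  calc trace M = trace (Qᵀ * (Q * M)) := by
        rw [← Matrix.mul_assoc, mul_eq_one_comm.mp hQ, Matrix.one_mul]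
    _ = trace (Q * M * Qᵀ) := trace_mul_comm _ _
    _ = ∑ k, Q k ⬝ᵥ (M *ᵥ Q k) := by
      simp only [trace, diag, mul_apply, dotProduct_mulVec]; rfl

theorem Matrix.sum_dotProduct_mulVec_eq_trace_of_orthonormal {R : Type*} [CommRing R]
    {e₁ e₂ e₃ : Fin 3 → R} (h₁ : e₁ ⬝ᵥ e₁ = 1) (h₂ : e₂ ⬝ᵥ e₂ = 1) (h₃ : e₃ ⬝ᵥ e₃ = 1)
    (h₁₂ : e₁ ⬝ᵥ e₂ = 0) (h₁₃ : e₁ ⬝ᵥ e₃ = 0) (h₂₃ : e₂ ⬝ᵥ e₃ = 0) (M : Matrix (Fin 3) (Fin 3) R) :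
    e₁ ⬝ᵥ M *ᵥ e₁ + e₂ ⬝ᵥ M *ᵥ e₂ + e₃ ⬝ᵥ M *ᵥ e₃ = trace M := by
  have hQ : of ![e₁, e₂, e₃] * (of ![e₁, e₂, e₃])ᵀ = 1 := by
    ext i j
    change ![e₁, e₂, e₃] i ⬝ᵥ ![e₁, e₂, e₃] j = _
    fin_cases i <;> fin_cases j <;> simp [h₁, h₂, h₃, h₁₂, h₁₃, h₂₃, dotProduct_comm e₂ e₁,
      dotProduct_comm e₃ e₁, dotProduct_comm e₃ e₂]
  rw [trace_eq_sum_dotProduct_mulVec hQ, Fin.sum_univ_three]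
  rfl

theorem of_dnhEntry (S : Matrix (Fin 3) (Fin 3) ℝ) (x n : Fin 3 → ℝ) :
    of (dnhEntry S x n) =
      (trace S / 6) • ((2 * (x ⬝ᵥ n)) • 1 - (vecMulVec x n + vecMulVec n x)) -
        ((S *ᵥ x ⬝ᵥ n + S *ᵥ n ⬝ᵥ x) / 3) • 1 - (2 * (x ⬝ᵥ n) / 3) • S +
        (1 / 3 : ℝ) • (vecMulVec x (S *ᵥ n) + vecMulVec n (S *ᵥ x) +
          vecMulVec (S *ᵥ n) x + vecMulVec (S *ᵥ x) n) := by
  ext α β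
  refine fderiv_apply_eq_of_forall_add_smul (c := hEntry S n α β) (by unfold hEntry; fun_prop)
    fun t => ?_
  simp only [hEntry, dotProduct, mulVec, Fin.sum_univ_three, vecMulVec_apply, one_apply,
    Matrix.add_apply, Matrix.sub_apply, Matrix.smul_apply, Pi.add_apply, Pi.smul_apply, smul_eq_mul]
  split_ifs <;> ring

theorem sum_sum_mul_dnhEntry_of_orthogonal (S : Matrix (Fin 3) (Fin 3) ℝ) {x n e : Fin 3 → ℝ}
    (he : e ⬝ᵥ e = 1) (hen : e ⬝ᵥ n = 0) :
    ∑ α, ∑ β, e α * dnhEntry S x n α β * e β =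
      trace S / 3 * (x ⬝ᵥ n) - (S *ᵥ x ⬝ᵥ n + S *ᵥ n ⬝ᵥ x) / 3 -
        2 / 3 * (x ⬝ᵥ n) * (e ⬝ᵥ S *ᵥ e) + 2 / 3 * (e ⬝ᵥ x) * (e ⬝ᵥ S *ᵥ n) := by
  have hsum : ∑ α, ∑ β, e α * dnhEntry S x n α β * e β = e ⬝ᵥ of (dnhEntry S x n) *ᵥ e := by
    rw [dot_mulVec_eq_sum_sum, Finset.sum_comm]; rfl
  rw [hsum, of_dnhEntry]
  simp only [add_mulVec, sub_mulVec, smul_mulVec, one_mulVec, vecMulVec_mulVec, op_smul_eq_smul,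
    dotProduct_add, dotProduct_sub, dotProduct_smul, smul_eq_mul, he, dotProduct_comm n e, hen,
    dotProduct_comm (S *ᵥ n) e, dotProduct_comm x e]
  ring

theorem sum_sum_mul_dnhEntry_tangent (S : Matrix (Fin 3) (Fin 3) ℝ) (x : Fin 3 → ℝ)
    {n e₁ e₂ : Fin 3 → ℝ} (hn : n ⬝ᵥ n = 1) (he₁ : e₁ ⬝ᵥ e₁ = 1) (he₂ : e₂ ⬝ᵥ e₂ = 1)
    (h₁₂ : e₁ ⬝ᵥ e₂ = 0) (h₁n : e₁ ⬝ᵥ n = 0) (h₂n : e₂ ⬝ᵥ n = 0) :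
    (∑ α, ∑ β, e₁ α * dnhEntry S x n α β * e₁ β) +
        (∑ α, ∑ β, e₂ α * dnhEntry S x n α β * e₂ β) = -(2 / 3) * (S *ᵥ x ⬝ᵥ n) := by
  have htrace := sum_dotProduct_mulVec_eq_trace_of_orthonormal he₁ he₂ hn h₁₂ h₁n h₂n S
  have hproj := sum_dotProduct_mulVec_eq_trace_of_orthonormal he₁ he₂ hn h₁₂ h₁n h₂n
    (vecMulVec x (S *ᵥ n))
  simp only [vecMulVec_mulVec, trace_vecMulVec, dotProduct_smul, op_smul_eq_smul, smul_eq_mul,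
    dotProduct_comm (S *ᵥ n)] at hproj
  rw [sum_sum_mul_dnhEntry_of_orthogonal S he₁ h₁n, sum_sum_mul_dnhEntry_of_orthogonal S he₂ h₂n,
    dotProduct_comm (S *ᵥ n) x, dotProduct_comm x n]
  linear_combination (-(2 / 3) * (n ⬝ᵥ x)) * htrace + (2 / 3) * hproj

theorem statement16_general (S : Matrix (Fin 3) (Fin 3) ℝ)
    (Atil : ℝ) (n₀ e₁ e₂ x : Fin 3 → ℝ)
    (hn : ∑ i, n₀ i ^ 2 = 1) (he₁ : ∑ i, e₁ i ^ 2 = 1) (he₂ : ∑ i, e₂ i ^ 2 = 1)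
    (h12 : ∑ i, e₁ i * e₂ i = 0) (h1n : ∑ i, e₁ i * n₀ i = 0)
    (h2n : ∑ i, e₂ i * n₀ i = 0)
    (hx : x = Atil • (n₀ + exv)) :
    (∑ α, ∑ β, e₁ α * dnhEntry S x n₀ α β * e₁ β) +
        (∑ α, ∑ β, e₂ α * dnhEntry S x n₀ α β * e₂ β) =
      -(2 * Atil / 3) * ∑ i, (∑ j, S i j * (n₀ j + exv j)) * n₀ i := by
  simp only [sq] at hn he₁ he₂
  rw [sum_sum_mul_dnhEntry_tangent S x hn he₁ he₂ h12 h1n h2n, hx, mulVec_smul, smul_dotProduct,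
    smul_eq_mul]
  change _ = _ * (S *ᵥ (n₀ + exv) ⬝ᵥ n₀)
  ring

theorem statement16 (S : Matrix (Fin 3) (Fin 3) ℝ) (hS : S.IsSymm)
    (Atil : ℝ) (hA : 0 < Atil) (n₀ e₁ e₂ x : Fin 3 → ℝ)
    (hn : ∑ i, n₀ i ^ 2 = 1) (he₁ : ∑ i, e₁ i ^ 2 = 1) (he₂ : ∑ i, e₂ i ^ 2 = 1)
    (h12 : ∑ i, e₁ i * e₂ i = 0) (h1n : ∑ i, e₁ i * n₀ i = 0)
    (h2n : ∑ i, e₂ i * n₀ i = 0)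
    (hx : x = Atil • (n₀ + exv)) :
    (∑ α, ∑ β, e₁ α * dnhEntry S x n₀ α β * e₁ β) +
        (∑ α, ∑ β, e₂ α * dnhEntry S x n₀ α β * e₂ β) =
      -(2 * Atil / 3) * ∑ i, (∑ j, S i j * (n₀ j + exv j)) * n₀ i :=
  statement16_general S Atil n₀ e₁ e₂ x hn he₁ he₂ h12 h1n h2n hx
end
end
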